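/- For every finite poset P, the interval monoid Int(P) is noetherian. -/

import Mathlib

/-! Common definitions: multifractions, divisibility, interval monoids, zigzags. -/

section Defs

variable {M : Type*}

/-- A multifraction on a monoid `M`: a finite sequence with entries alternately in `M`
(sign `true`) and in a formal disjoint copy of `M` (sign `false`). -/
structure Multifraction (M : Type*) [Monoid M] where
  entries : List (Bool × M)
  alt : entries.Chain' fun p q => p.1 ≠ q.1

/-- The product of two multifraction entry lists: merge the adjacent entries when they have
the same sign, concatenate otherwise. -/
def mfMul [Monoid M] (l₁ l₂ : List (Bool × M)) : List (Bool × M) :=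
  match l₁.getLast?, l₂ with
  | some (b, x), (c, y) :: t =>
      if b = c then l₁.dropLast ++ (b, if b then x * y else y * x) :: t else l₁ ++ l₂
  | _, _ => l₁ ++ l₂

/-- The one-entry positive multifraction. -/
def mfPos [Monoid M] (x : M) : Multifraction M := ⟨[(true, x)], List.isChain_singleton _⟩

/-- The one-entry negative multifraction. -/
def mfNeg [Monoid M] (x : M) : Multifraction M := ⟨[(false, x)], List.isChain_singleton _⟩

/-- `a` left divides `b`. -/
def LDvd [Monoid M] (a b : M) : Prop := ∃ c, a * c = b

/-- `a` right divides `b`. -/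
def RDvd [Monoid M] (a b : M) : Prop := ∃ c, c * a = b

/-- `M` is (left and right) cancellative. -/
def Cancellative (M : Type*) [Monoid M] : Prop :=
  (∀ a b c : M, a * b = a * c → b = c) ∧ (∀ a b c : M, b * a = c * a → b = c)

/-- `1` is the only invertible element of `M`. -/
def TrivialUnits (M : Type*) [Monoid M] : Prop := ∀ a : M, IsUnit a → a = 1

/-- Any two elements admit a left gcd. -/
def HasLeftGcds (M : Type*) [Monoid M] : Prop :=
  ∀ a b : M, ∃ d, LDvd d a ∧ LDvd d b ∧ ∀ e, LDvd e a → LDvd e b → LDvd e d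

/-- Any two elements admit a right gcd. -/
def HasRightGcds (M : Type*) [Monoid M] : Prop :=
  ∀ a b : M, ∃ d, RDvd d a ∧ RDvd d b ∧ ∀ e, RDvd e a → RDvd e b → RDvd e d

/-- `M` is a gcd-monoid. -/
def GcdMonoidProp (M : Type*) [Monoid M] : Prop :=
  Cancellative M ∧ TrivialUnits M ∧ HasLeftGcds M ∧ HasRightGcds M

/-- `m` is a right lcm of `u` and `v`. -/
def IsRightLcm [Monoid M] (u v m : M) : Prop :=
  LDvd u m ∧ LDvd v m ∧ ∀ w, LDvd u w → LDvd v w → LDvd m w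

/-- `m` is a left lcm of `u` and `v`. -/
def IsLeftLcm [Monoid M] (u v m : M) : Prop :=
  RDvd u m ∧ RDvd v m ∧ ∀ w, RDvd u w → RDvd v w → RDvd m w

/-- `M` is a noetherian monoid: cancellative, with trivial units, and with well-founded
proper left and right divisibility. -/
def NoetherianMonoid (M : Type*) [Monoid M] : Prop :=
  Cancellative M ∧ TrivialUnits M ∧
    WellFounded (fun a b : M => LDvd a b ∧ a ≠ b) ∧
    WellFounded (fun a b : M => RDvd a b ∧ a ≠ b)

/-- An atom of a monoid. -/
def MonAtom [Monoid M] (a : M) : Prop :=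
  a ≠ 1 ∧ ∀ b c : M, a = b * c → b = 1 ∨ c = 1

/-- `η : M →* G` exhibits `G` as the enveloping (universal) group of `M`. -/
def IsEnvelopingGroup (M : Type*) [Monoid M] (G : Type*) [Group G] (η : M →* G) : Prop :=
  ∀ (H : Type*) [Group H] (f : M →* H), ∃! g : G →* H, g.comp η = f

/-- Evaluation of a multifraction in a group `G` through `η : M →* G`. -/
def mfEval [Monoid M] {G : Type*} [Group G] (η : M →* G) (a : Multifraction M) : G :=
  (a.entries.map fun p => if p.1 then η p.2 else (η p.2)⁻¹).prod

/-- A multifraction is trivial if all its entries equal `1`. -/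
def MfTrivial [Monoid M] (a : Multifraction M) : Prop := ∀ p ∈ a.entries, p.2 = 1

/-- `a` is a proper piece of `b` (relative to a monoid structure on multifractions). -/
def Piece [Monoid M] [Monoid (Multifraction M)] (a b : Multifraction M) : Prop :=
  ∃ c d : Multifraction M, b = c * a * d ∧ ¬(MfTrivial c ∧ MfTrivial d)

/-- The `j`-th entry of a multifraction (with default `(true, 1)`). -/
def mfEntry [Monoid M] (a : Multifraction M) (j : ℕ) : Bool × M :=
  (a.entries[j]?).getD (true, 1)

/-- The reduction rule `R_{i,x}` (here `j = i - 1` is the 0-based level):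
`b = a • R_{i,x}`. -/
def RedAt [Monoid M] (a b : Multifraction M) (j : ℕ) (x : M) : Prop :=
  b.entries.length = a.entries.length ∧ j + 1 < a.entries.length ∧
  (∀ k, ¬(j - 1 ≤ k ∧ k ≤ j + 1) → b.entries[k]? = a.entries[k]?) ∧
  (∀ k, (mfEntry b k).1 = (mfEntry a k).1) ∧
  (if (mfEntry a j).1 then
     if j = 0 then
       (mfEntry b 0).2 * x = (mfEntry a 0).2 ∧ (mfEntry b 1).2 * x = (mfEntry a 1).2
     else ∃ x' : M,
       (mfEntry b (j - 1)).2 = x' * (mfEntry a (j - 1)).2 ∧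
       (mfEntry b j).2 * x = x' * (mfEntry a j).2 ∧
       IsLeftLcm x (mfEntry a j).2 ((mfEntry b j).2 * x) ∧
       (mfEntry b (j + 1)).2 * x = (mfEntry a (j + 1)).2
   else
     if j = 0 then
       x * (mfEntry b 0).2 = (mfEntry a 0).2 ∧ x * (mfEntry b 1).2 = (mfEntry a 1).2
     else ∃ x' : M,
       (mfEntry b (j - 1)).2 = (mfEntry a (j - 1)).2 * x' ∧
       x * (mfEntry b j).2 = (mfEntry a j).2 * x' ∧
       IsRightLcm x (mfEntry a j).2 (x * (mfEntry b j).2) ∧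
       x * (mfEntry b (j + 1)).2 = (mfEntry a (j + 1)).2)

/-- One reduction step. -/
def Reduces [Monoid M] (a b : Multifraction M) : Prop := ∃ j x, x ≠ 1 ∧ RedAt a b j x

/-- A multifraction is reducible if some rule `R_{i,x}` with `x ≠ 1` applies to it. -/
def Reducible [Monoid M] (a : Multifraction M) : Prop := ∃ b, Reduces a b

/-- Iterated reduction. -/
def ReducesStar [Monoid M] : Multifraction M → Multifraction M → Prop :=
  Relation.ReflTransGen Reduces

/-- Semi-convergence of reduction (relative to an enveloping group `η : M →* G`):
every unital multifraction reduces to a trivial one. -/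
def SemiConvergent [Monoid M] {G : Type*} [Group G] (η : M →* G) : Prop :=
  ∀ a : Multifraction M, mfEval η a = 1 → ∃ b, ReducesStar a b ∧ MfTrivial b

end Defs

section Interval

variable (P : Type*) [PartialOrder P]

/-- The intervals of a poset `P`. -/
def Iv := {p : P × P // p.1 ≤ p.2}

/-- The defining relations of the interval monoid of `P`. -/
def intervalRel : FreeMonoid (Iv P) → FreeMonoid (Iv P) → Prop := fun u v =>
  (∃ (x y z : P) (hxy : x ≤ y) (hyz : y ≤ z),
      u = FreeMonoid.of ⟨(x, z), hxy.trans hyz⟩ ∧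
      v = FreeMonoid.of ⟨(x, y), hxy⟩ * FreeMonoid.of ⟨(y, z), hyz⟩) ∨
  (∃ x : P, u = FreeMonoid.of ⟨(x, x), le_refl x⟩ ∧ v = 1)

/-- The interval monoid of the poset `P`. -/
def IntervalMonoid := (conGen (intervalRel P)).Quotient

instance : Monoid (IntervalMonoid P) :=
  inferInstanceAs (Monoid (conGen (intervalRel P)).Quotient)

variable {P}

/-- The generator `[x, y]` of the interval monoid. -/
def intv (I : Iv P) : IntervalMonoid P := (conGen (intervalRel P)).mk' (FreeMonoid.of I)

variable (P)

/-- `P` is a local lattice: each `P^{≥ x}` is a meet-semilattice and each `P^{≤ x}` is a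
join-semilattice. -/
def LocalLattice : Prop :=
  (∀ x a b : P, x ≤ a → x ≤ b →
      ∃ m, x ≤ m ∧ m ≤ a ∧ m ≤ b ∧ ∀ c, x ≤ c → c ≤ a → c ≤ b → c ≤ m) ∧
  (∀ x a b : P, a ≤ x → b ≤ x →
      ∃ m, m ≤ x ∧ a ≤ m ∧ b ≤ m ∧ ∀ c, c ≤ x → a ≤ c → b ≤ c → m ≤ c)

/-- Noetherianity conditions on the poset `P`: no infinite descending chain in any `P^{≥ x}`
and no infinite ascending chain in any `P^{≤ x}`. -/
def PosetNoethCond : Prop :=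
  ∀ x : P, WellFounded (fun a b : {y : P // x ≤ y} => (a : P) < (b : P)) ∧
    WellFounded (fun a b : {y : P // y ≤ x} => (b : P) < (a : P))

variable {P}

/-- A simple multifraction on the interval monoid: each entry is a proper interval, and
consecutive entries share their target (at positive positions) or source (at negative ones). -/
def MfSimple (a : Multifraction (IntervalMonoid P)) : Prop :=
  ∃ l : List (Bool × Iv P),
    a.entries = l.map (fun p => (p.1, intv p.2)) ∧
    (∀ p ∈ l, p.2.1.1 ≠ p.2.1.2) ∧
    l.Chain' fun p q => if p.1 then p.2.1.2 = q.2.1.2 else p.2.1.1 = q.2.1.1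

/-- A positive `n`-zigzag in `P`. -/
def PosZigzag (n : ℕ) (x : ℕ → P) : Prop :=
  ∀ i ≤ n, i % 2 = 0 → (1 ≤ i → x i < x (i - 1)) ∧ (i < n → x i < x (i + 1))

/-- A negative `n`-zigzag in `P`. -/
def NegZigzag (n : ℕ) (x : ℕ → P) : Prop :=
  ∀ i ≤ n, i % 2 = 1 → (1 ≤ i → x i < x (i - 1)) ∧ (i < n → x i < x (i + 1))

/-- The zigzag `x` is simple: `x₁, ..., xₙ` are pairwise distinct. -/
def SimpleZz (n : ℕ) (x : ℕ → P) : Prop :=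
  ∀ i j, 1 ≤ i → i < j → j ≤ n → x i ≠ x j

/-- Reducibility of a zigzag at level `i`. -/
def ZzRedAt (n : ℕ) (x : ℕ → P) (i : ℕ) : Prop :=
  1 ≤ i ∧ i < n ∧
  ((2 ≤ i ∧ x i < x (i + 1) ∧
      ∃ y, x i < y ∧ y ≤ x (i + 1) ∧ ∃ u, x (i - 1) ≤ u ∧ y ≤ u) ∨
   (2 ≤ i ∧ x (i + 1) < x i ∧
      ∃ y, x (i + 1) ≤ y ∧ y < x i ∧ ∃ u, u ≤ x (i - 1) ∧ u ≤ y) ∨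
   (i = 1 ∧ x 0 < x 1 ∧ ∃ y, x 0 ≤ y ∧ y < x 1 ∧ x 2 ≤ y) ∨
   (i = 1 ∧ x 1 < x 0 ∧ ∃ y, x 1 < y ∧ y ≤ x 0 ∧ y ≤ x 2))

/-- A zigzag is reducible if it is reducible at some level. -/
def ZzReducible (n : ℕ) (x : ℕ → P) : Prop := ∃ i, ZzRedAt n x i

/-- The multifraction `a` is the image of the positive `n`-zigzag `x` under the map `F`. -/
def PosImage (n : ℕ) (x : ℕ → P) (a : Multifraction (IntervalMonoid P)) : Prop :=
  a.entries.length = n ∧ ∀ j < n,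
    if j % 2 = 0 then
      ∃ h : x j ≤ x (j + 1), a.entries[j]? = some (true, intv ⟨(x j, x (j + 1)), h⟩)
    else
      ∃ h : x (j + 1) ≤ x j, a.entries[j]? = some (false, intv ⟨(x (j + 1), x j), h⟩)

/-- The multifraction `a` is the image of the negative `n`-zigzag `x` under the map `F`. -/
def NegImage (n : ℕ) (x : ℕ → P) (a : Multifraction (IntervalMonoid P)) : Prop :=
  a.entries.length = n ∧ ∀ j < n,
    if j % 2 = 0 then
      ∃ h : x (j + 1) ≤ x j, a.entries[j]? = some (false, intv ⟨(x (j + 1), x j), h⟩)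
    else
      ∃ h : x j ≤ x (j + 1), a.entries[j]? = some (true, intv ⟨(x j, x (j + 1)), h⟩)

end Interval

/-!
Every element of `Int(P)` has a normal form, a word of proper intervals in which no interval ends
where the next one starts; left multiplication by a generator acts on normal forms by merging or
prepending, and this action is injective, which gives left cancellation. Reading intervals
backwards is an injective anti-homomorphism `Int(P) → Int(Pᵒᵈ)`, so right cancellation follows.
A finite poset admits a strictly monotone `f : P → ℕ`, and `[x, y] ↦ f y - f x` is an additive
weight vanishing only at `1`: it forces trivial units and bounds every chain of proper divisors.
-/

theorem NoetherianMonoid.of_weight {M : Type*} [Monoid M] [IsCancelMul M]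
    (w : M →* Multiplicative ℕ) (hw : ∀ a, w a = 1 → a = 1) : NoetherianMonoid M := by
  have weight_lt {a c : M} (hc : c ≠ 1) :
      (w a).toAdd < (w (a * c)).toAdd ∧ (w a).toAdd < (w (c * a)).toAdd := by
    have : 0 < (w c).toAdd := Nat.pos_of_ne_zero fun h => hc (hw c (toAdd_eq_zero.1 h))
    simp only [map_mul, toAdd_mul]
    omega
  refine ⟨⟨fun _ _ _ => mul_left_cancel, fun _ _ _ => mul_right_cancel⟩,
    fun a ha => hw a (isUnit_iff_eq_one.1 (ha.map w)),
    Subrelation.wf ?_ (measure fun a => (w a).toAdd).wf,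
    Subrelation.wf ?_ (measure fun a => (w a).toAdd).wf⟩
  · rintro a _ ⟨⟨c, rfl⟩, hne⟩
    exact (weight_lt fun hc => hne (by rw [hc, mul_one])).1
  · rintro a _ ⟨⟨c, rfl⟩, hne⟩
    exact (weight_lt fun hc => hne (by rw [hc, one_mul])).2

namespace IntervalMonoid

variable {P : Type*} [PartialOrder P] {M : Type*} [Monoid M]

lemma intv_self (x : P) : intv (⟨(x, x), le_rfl⟩ : Iv P) = 1 :=
  (Con.eq _).2 <| ConGen.Rel.of _ _ <| Or.inr ⟨x, rfl, rfl⟩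

lemma intv_trans {x y z : P} (hxy : x ≤ y) (hyz : y ≤ z) :
    intv (⟨(x, z), hxy.trans hyz⟩ : Iv P) = intv ⟨(x, y), hxy⟩ * intv ⟨(y, z), hyz⟩ :=
  (Con.eq _).2 <| ConGen.Rel.of _ _ <| Or.inl ⟨x, y, z, hxy, hyz, rfl, rfl⟩

lemma intv_eq_one {I : Iv P} (h : I.1.1 = I.1.2) : intv I = 1 := by
  obtain ⟨⟨x, y⟩, hxy⟩ := I
  obtain rfl : x = y := h
  exact intv_self x

def lift (f : Iv P → M) (hself : ∀ x : P, f ⟨(x, x), le_rfl⟩ = 1)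
    (htrans : ∀ (x y z : P) (hxy : x ≤ y) (hyz : y ≤ z),
      f ⟨(x, z), hxy.trans hyz⟩ = f ⟨(x, y), hxy⟩ * f ⟨(y, z), hyz⟩) :
    IntervalMonoid P →* M :=
  (conGen (intervalRel P)).lift (FreeMonoid.lift f) <| Con.conGen_le.2 <| by
    rintro _ _ (⟨x, y, z, hxy, hyz, rfl, rfl⟩ | ⟨x, rfl, rfl⟩)
    · exact htrans x y z hxy hyz
    · exact hself x

@[elab_as_elim]
lemma induction_on {p : IntervalMonoid P → Prop} (a : IntervalMonoid P) (one : p 1)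
    (intv_mul : ∀ I a, p a → p (intv I * a)) : p a := by
  induction a using Con.induction_on with
  | H w =>
    induction w using FreeMonoid.inductionOn' with
    | one => exact one
    | of_mul I w ih => exact intv_mul I _ ih

open Classical in
/-- On normal forms (lists of proper intervals, none ending where the next one starts) this is
left multiplication by `intv I`. -/
noncomputable def push (I : Iv P) (S : List (Iv P)) : List (Iv P) :=
  if I.1.1 = I.1.2 then S else
    match S with
    | J :: S => if h : I.1.2 = J.1.1 then ⟨(I.1.1, J.1.2), I.2.trans (h.trans_le J.2)⟩ :: S
        else I :: J :: S
    | [] => [I]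

lemma push_self (x : P) (S : List (Iv P)) : push ⟨(x, x), le_rfl⟩ S = S := by
  simp [push]

lemma push_trans {x y z : P} (hxy : x ≤ y) (hyz : y ≤ z) (S : List (Iv P)) :
    push ⟨(x, z), hxy.trans hyz⟩ S = push ⟨(x, y), hxy⟩ (push ⟨(y, z), hyz⟩ S) := by
  rcases eq_or_ne x y with rfl | hxy'
  · simp [push_self]
  rcases eq_or_ne y z with rfl | hyz'
  · simp [push_self]
  have hxz : x ≠ z := fun h => hxy' (le_antisymm hxy (h ▸ hyz))
  cases S with
  | nil => simp [push, hxy', hyz', hxz]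
  | cons J S =>
    obtain ⟨⟨u, w⟩, huw⟩ := J
    rcases eq_or_ne z u with rfl | hzu
    · simp [push, hxy', hyz', hxz]
    · simp [push, hxy', hyz', hxz, hzu]

noncomputable def pushHom : IntervalMonoid P →* Function.End (List (Iv P)) :=
  lift push (fun x => funext (push_self x)) fun _ _ _ hxy hyz => funext (push_trans hxy hyz)

noncomputable def nf (a : IntervalMonoid P) : List (Iv P) := pushHom a []

@[simp]
lemma nf_one : nf (1 : IntervalMonoid P) = [] := rfl

lemma nf_intv_mul (I : Iv P) (a : IntervalMonoid P) : nf (intv I * a) = push I (nf a) := by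
  rw [nf, map_mul]
  rfl

lemma prod_map_intv_push (I : Iv P) (S : List (Iv P)) :
    ((push I S).map intv).prod = intv I * (S.map intv).prod := by
  unfold push
  split_ifs with hI
  · rw [intv_eq_one hI, one_mul]
  split
  · next J S =>
    split_ifs with h
    · obtain ⟨⟨x, y⟩, hxy⟩ := I
      obtain ⟨⟨u, v⟩, huv⟩ := J
      obtain rfl : y = u := h
      show intv _ * _ = intv _ * (intv _ * _)
      rw [← mul_assoc, ← intv_trans]
    · simp
  · simp

lemma prod_map_intv_nf (a : IntervalMonoid P) : ((nf a).map intv).prod = a := by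
  induction a using induction_on with
  | one => rfl
  | intv_mul I a ih => rw [nf_intv_mul, prod_map_intv_push, ih]

lemma nf_injective : Function.Injective (nf : IntervalMonoid P → List (Iv P)) :=
  Function.LeftInverse.injective (g := fun S : List (Iv P) => (S.map intv).prod) prod_map_intv_nf

lemma push_proper (I : Iv P) {S : List (Iv P)} (hS : ∀ J ∈ S, J.1.1 < J.1.2) :
    ∀ J ∈ push I S, J.1.1 < J.1.2 := by
  unfold push
  split_ifs with hI
  · exact hS
  have hI' : I.1.1 < I.1.2 := lt_of_le_of_ne I.2 hI
  split
  · next J S =>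
    have hJ := hS J (by simp)
    split_ifs with h
    · intro K hK
      rcases List.mem_cons.1 hK with rfl | hK
      exacts [hI'.trans_le (h.trans_le hJ.le), hS K (List.mem_cons_of_mem J hK)]
    · intro K hK
      rcases List.mem_cons.1 hK with rfl | hK
      exacts [hI', hS K hK]
  · intro K hK
    rw [List.mem_singleton.1 hK]
    exact hI'

lemma nf_proper (a : IntervalMonoid P) : ∀ J ∈ nf a, J.1.1 < J.1.2 := by
  induction a using induction_on with
  | one => simp
  | intv_mul I a ih => rw [nf_intv_mul]; exact push_proper I ih

/-- The head of `push I S` is `I` exactly when nothing was merged; a merged head `[x, v]` comes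
from the head `[y, v]` of `S`, where `x < y < v` keeps the two cases apart. -/
lemma push_injOn (I : Iv P) : Set.InjOn (push I) {S | ∀ J ∈ S, J.1.1 < J.1.2} := by
  intro S hS T hT h
  obtain ⟨⟨x, y⟩, hxy⟩ := I
  rcases eq_or_ne x y with rfl | hxy'
  · simpa [push_self] using h
  rcases S with _ | ⟨⟨⟨u, v⟩, huv⟩, S⟩ <;> rcases T with _ | ⟨⟨⟨u', v'⟩, huv'⟩, T⟩ <;>
    grind [push, List.mem_cons_self]

lemma isLeftRegular_intv (I : Iv P) : IsLeftRegular (intv I) := fun a b h =>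
  nf_injective <| push_injOn I (nf_proper a) (nf_proper b) <| by
    rw [← nf_intv_mul, ← nf_intv_mul]
    exact congrArg nf h

instance : IsLeftCancelMul (IntervalMonoid P) where
  mul_left_cancel a := by
    induction a using induction_on with
    | one => exact isRegular_one.left
    | intv_mul I a ih => exact (isLeftRegular_intv I).mul ih

def toDual : IntervalMonoid P →* (IntervalMonoid Pᵒᵈ)ᵐᵒᵖ :=
  lift (fun I => .op (intv ⟨(OrderDual.toDual I.1.2, OrderDual.toDual I.1.1), I.2⟩))
    (fun x => by rw [intv_self, MulOpposite.op_one])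
    (fun _ _ z hxy hyz =>
      congrArg MulOpposite.op (intv_trans (P := Pᵒᵈ) (x := OrderDual.toDual z) hyz hxy))

def ofDual : IntervalMonoid Pᵒᵈ →* (IntervalMonoid P)ᵐᵒᵖ :=
  lift (fun I => .op (intv ⟨(OrderDual.ofDual I.1.2, OrderDual.ofDual I.1.1), I.2⟩))
    (fun x => by rw [intv_self, MulOpposite.op_one])
    (fun _ _ z hxy hyz =>
      congrArg MulOpposite.op (intv_trans (P := P) (x := OrderDual.ofDual z) hyz hxy))

lemma ofDual_toDual (a : IntervalMonoid P) : (ofDual (toDual a).unop).unop = a := by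
  induction a using induction_on with
  | one => simp
  | intv_mul I a ih =>
    rw [map_mul, MulOpposite.unop_mul, map_mul, MulOpposite.unop_mul, ih]
    rfl

lemma toDual_injective : Function.Injective (toDual : IntervalMonoid P →* _) := fun a b h => by
  rw [← ofDual_toDual a, h, ofDual_toDual]

instance : IsCancelMul (IntervalMonoid P) where
  mul_left_cancel := IsLeftCancelMul.mul_left_cancel
  mul_right_cancel a b c h := toDual_injective <| MulOpposite.unop_injective <|
    mul_left_cancel (a := (toDual a).unop) <| by simpa using congrArg (fun d => (toDual d).unop) h

def weight {f : P → ℕ} (hf : Monotone f) : IntervalMonoid P →* Multiplicative ℕ :=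
  lift (fun I => .ofAdd (f I.1.2 - f I.1.1)) (fun x => by simp) fun x y z hxy hyz => by
    change Multiplicative.ofAdd (f z - f x) = .ofAdd (f y - f x) * .ofAdd (f z - f y)
    rw [← ofAdd_add]
    have := hf hxy
    have := hf hyz
    congr 1
    omega

lemma eq_one_of_weight_eq_one {f : P → ℕ} (hf : StrictMono f) {a : IntervalMonoid P}
    (h : weight hf.monotone a = 1) : a = 1 := by
  induction a using induction_on with
  | one => rfl
  | intv_mul I a ih =>
    rw [map_mul, mul_eq_one] at h
    have hI : I.1.1 = I.1.2 := by
      by_contra hne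
      have hlt := hf (lt_of_le_of_ne I.2 hne)
      have h0 : f I.1.2 - f I.1.1 = 0 := h.1
      omega
    rw [intv_eq_one hI, ih h.2, mul_one]

theorem noetherianMonoid_of_strictMono {f : P → ℕ} (hf : StrictMono f) :
    NoetherianMonoid (IntervalMonoid P) :=
  .of_weight (weight hf.monotone) fun _ => eq_one_of_weight_eq_one hf

end IntervalMonoid

/-- For every finite poset `P`, the interval monoid `Int(P)` is noetherian. -/
theorem intervalMonoid_noetherian_of_finite (P : Type*) [PartialOrder P] [Finite P] :
    NoetherianMonoid (IntervalMonoid P) :=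
  IntervalMonoid.noetherianMonoid_of_strictMono (f := fun x => (Set.Iio x).ncard)
    fun _ _ h => Set.ncard_strictMono (Set.Iio_ssubset_Iio h)
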